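/- Define Δ(u) := log(−log u) for u ∈ (0,1) and κ_k(a,b) := (1/(b−a)) ∫_a^b Δ(u)^k du for 0 ≤ a < b ≤ 1. Suppose 0 ≤ a_j ≤ a_i < b̄_j ≤ b̄_i ≤ 1 (writing v̄ := 1 − v), and set ζ(a_i, b̄_j) := κ₁(a_i, b̄_i)² − 2·κ₁(a_i, b̄_i)·κ₁(a_j, b̄_j) + κ₂(a_j, b̄_j) and ζ(a_j, b̄_j) := κ₂(a_j, b̄_j) − κ₁(a_j, b̄_j)². Then ζ_r := ζ(a_j, b̄_j)/ζ(a_i, b̄_j) satisfies 0 < ζ_r ≤ 1. -/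

import Mathlib

open MeasureTheory Set

/-- `Δ(u) = log(-log u)`. -/
noncomputable def DeltaF (u : ℝ) : ℝ := Real.log (-Real.log u)

/-- `κ_k(a,b) = (1/(b-a)) ∫_a^b Δ(u)^k du`. -/
noncomputable def kappaF (k : ℕ) (a b : ℝ) : ℝ :=
  (b - a)⁻¹ * ∫ u in a..b, (DeltaF u) ^ k

/-!
`ζ(a_i, b̄_j) - ζ(a_j, b̄_j) = (κ₁(a_i, b̄_i) - κ₁(a_j, b̄_j))² ≥ 0`, and `ζ(a_j, b̄_j)` is the
variance of `Δ` under the uniform distribution on `(a_j, b̄_j)`. That variance is finite because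
`1 - u ≤ -log u ≤ 1/u` and `(log L)² ≤ 16 (√L + 2 + 1/√L)` dominate `Δ²` by an integrable
function, and positive because `Δ` is strictly decreasing, hence not almost surely constant.
-/

open Real ProbabilityTheory

lemma abs_log_le_add_inv {x : ℝ} (hx : 0 < x) : |log x| ≤ x + x⁻¹ := by
  have h := log_le_sub_one_of_pos hx
  have h' := log_le_sub_one_of_pos (inv_pos.mpr hx)
  rw [log_inv] at h'
  rw [abs_le]
  constructor <;> linarith [inv_pos.mpr hx]

lemma log_sq_le {x : ℝ} (hx : 0 < x) : log x ^ 2 ≤ 16 * (√x + 2 + (√x)⁻¹) := by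
  set s := √(√x)
  have hs : 0 < s := sqrt_pos.mpr (sqrt_pos.mpr hx)
  have hlog : log x = 4 * log s := by
    rw [log_sqrt (sqrt_nonneg x), log_sqrt hx.le]; ring
  have hs2 : s ^ 2 = √x := sq_sqrt (sqrt_nonneg x)
  calc log x ^ 2 = 16 * |log s| ^ 2 := by rw [hlog, sq_abs]; ring
    _ ≤ 16 * (s + s⁻¹) ^ 2 := by gcongr; exact abs_log_le_add_inv hs
    _ = 16 * (√x + 2 + (√x)⁻¹) := by rw [← hs2]; field_simp; ring

lemma one_sub_le_neg_log {u : ℝ} (hu : 0 < u) : 1 - u ≤ -log u := by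
  linarith [log_le_sub_one_of_pos hu]

lemma neg_log_le_inv {u : ℝ} (hu : 0 < u) : -log u ≤ u⁻¹ := by
  have h := log_le_sub_one_of_pos (inv_pos.mpr hu)
  rw [log_inv] at h
  linarith

lemma DeltaF_sq_le {u : ℝ} (hu : u ∈ Ioo (0 : ℝ) 1) :
    DeltaF u ^ 2 ≤ 16 * (u ^ (-(1 / 2) : ℝ) + 2 + (1 - u) ^ (-(1 / 2) : ℝ)) := by
  obtain ⟨hu0, hu1⟩ := hu
  have h1u : 0 < 1 - u := by linarith
  have hL : 0 < -log u := neg_pos.mpr (log_neg hu0 hu1)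
  have hupper : √(-log u) ≤ u ^ (-(1 / 2) : ℝ) := by
    rw [rpow_neg hu0.le, ← sqrt_eq_rpow, ← sqrt_inv]
    exact sqrt_le_sqrt (neg_log_le_inv hu0)
  have hlower : (√(-log u))⁻¹ ≤ (1 - u) ^ (-(1 / 2) : ℝ) := by
    rw [rpow_neg h1u.le, ← sqrt_eq_rpow]
    exact inv_anti₀ (sqrt_pos.mpr h1u) (sqrt_le_sqrt (one_sub_le_neg_log hu0))
  have := log_sq_le hL
  rw [DeltaF]
  linarith

@[fun_prop]
lemma measurable_DeltaF : Measurable DeltaF := by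
  unfold DeltaF; fun_prop

lemma integrableOn_DeltaF_sq : IntegrableOn (fun u ↦ DeltaF u ^ 2) (Ioo 0 1) := by
  have hleft : IntegrableOn (fun u : ℝ ↦ u ^ (-(1 / 2) : ℝ)) (Ioo 0 1) :=
    (intervalIntegral.integrableOn_Ioo_rpow_iff one_pos).mpr (by norm_num)
  have hright : IntegrableOn (fun u : ℝ ↦ (1 - u) ^ (-(1 / 2) : ℝ)) (Ioo 0 1) := by
    have h := (intervalIntegral.intervalIntegrable_rpow' (r := -(1 / 2)) (by norm_num)
      (a := 0) (b := 1)).comp_sub_left 1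
    simp only [sub_zero, sub_self] at h
    exact (h.symm.1).mono_set Ioo_subset_Ioc_self
  have hdom : IntegrableOn (fun u : ℝ ↦ 16 * (u ^ (-(1 / 2) : ℝ) + 2 + (1 - u) ^ (-(1 / 2) : ℝ)))
      (Ioo 0 1) :=
    ((hleft.add (integrableOn_const (by simp))).add hright).const_mul 16
  refine hdom.mono' (by fun_prop) ((ae_restrict_iff' measurableSet_Ioo).mpr ?_)
  refine .of_forall fun u hu ↦ ?_
  rw [norm_of_nonneg (sq_nonneg _)]
  exact DeltaF_sq_le hu

lemma strictAntiOn_DeltaF : StrictAntiOn DeltaF (Ioo 0 1) := fun _ hu _ hv huv ↦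
  log_lt_log (neg_pos.mpr (log_neg hv.1 hv.2)) (neg_lt_neg (log_lt_log hu.1 huv))

section UniformOnIoo

variable {a c : ℝ}

lemma kappaF_eq_integral_cond (k : ℕ) (hac : a < c) :
    kappaF k a c = ∫ u, DeltaF u ^ k ∂volume[|Ioo a c] := by
  rw [kappaF, intervalIntegral.integral_of_le hac.le, integral_Ioc_eq_integral_Ioo,
    ProbabilityTheory.cond, integral_smul_measure, volume_Ioo, ENNReal.toReal_inv, ENNReal.toReal_ofReal (by linarith),
    smul_eq_mul]

lemma isProbabilityMeasure_cond_Ioo (hac : a < c) : IsProbabilityMeasure volume[|Ioo a c] :=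
  cond_isProbabilityMeasure_of_finite (by simp [volume_Ioo, hac]) (by simp [volume_Ioo])

lemma memLp_DeltaF_cond (ha : 0 ≤ a) (hac : a < c) (hc : c ≤ 1) :
    MemLp DeltaF 2 volume[|Ioo a c] := by
  rw [memLp_two_iff_integrable_sq (by fun_prop)]
  exact ((integrableOn_DeltaF_sq.mono_set (Ioo_subset_Ioo ha hc)).smul_measure
    (by simp [volume_Ioo, hac]))

lemma variance_DeltaF_cond_pos (ha : 0 ≤ a) (hac : a < c) (hc : c ≤ 1) :
    0 < Var[DeltaF; volume[|Ioo a c]] := by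
  have := isProbabilityMeasure_cond_Ioo hac
  refine (variance_nonneg _ _).lt_of_ne fun hzero ↦ ?_
  set S := {u ∈ Ioo 0 1 | DeltaF u = ∫ v, DeltaF v ∂volume[|Ioo a c]}
  have hS : ∀ᵐ u ∂volume[|Ioo a c], u ∈ S := by
    filter_upwards [ae_cond_mem measurableSet_Ioo,
      ae_eq_integral_of_variance_eq_zero (memLp_DeltaF_cond ha hac hc) hzero.symm] with u hu hΔ
    exact ⟨Ioo_subset_Ioo ha hc hu, hΔ⟩
  have hS_null : volume S = 0 :=
    Subsingleton.measure_zero (fun u hu v hv ↦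
      strictAntiOn_DeltaF.injOn hu.1 hv.1 (hu.2.trans hv.2.symm)) _
  have hSc : ∀ᵐ u ∂volume[|Ioo a c], u ∉ S :=
    measure_eq_zero_iff_ae_notMem.mp (cond_absolutelyContinuous hS_null)
  obtain ⟨u, hu, hu'⟩ := (hS.and hSc).exists
  exact hu' hu

lemma kappaF_two_sub_sq_eq_variance (ha : 0 ≤ a) (hac : a < c) (hc : c ≤ 1) :
    kappaF 2 a c - kappaF 1 a c ^ 2 = Var[DeltaF; volume[|Ioo a c]] := by
  have := isProbabilityMeasure_cond_Ioo hac
  rw [variance_eq_sub (memLp_DeltaF_cond ha hac hc), kappaF_eq_integral_cond 2 hac,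
    kappaF_eq_integral_cond 1 hac]
  simp only [Pi.pow_apply, pow_one]

end UniformOnIoo

/-- The ratio `ζ_r = ζ(a_j,b̄_j)/ζ(a_i,b̄_j)` satisfies `0 < ζ_r ≤ 1` under the
trimming inequality `0 ≤ a_j ≤ a_i < b̄_j ≤ b̄_i ≤ 1`. -/
theorem zeta_ratio_mem_Ioc (aj ai bj bi : ℝ)
    (h0 : 0 ≤ aj) (h1 : aj ≤ ai) (h2 : ai < 1 - bj) (h3 : 1 - bj ≤ 1 - bi)
    (h4 : 1 - bi ≤ 1)
    (ζij ζjj ζr : ℝ)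
    (hζij : ζij = (kappaF 1 ai (1 - bi)) ^ 2
        - 2 * kappaF 1 ai (1 - bi) * kappaF 1 aj (1 - bj)
        + kappaF 2 aj (1 - bj))
    (hζjj : ζjj = kappaF 2 aj (1 - bj) - (kappaF 1 aj (1 - bj)) ^ 2)
    (hζr : ζr = ζjj / ζij) :
    0 < ζr ∧ ζr ≤ 1 := by
  have hac : aj < 1 - bj := h1.trans_lt h2
  have hc : 1 - bj ≤ 1 := h3.trans h4
  have hjj : 0 < ζjj := by
    rw [hζjj, kappaF_two_sub_sq_eq_variance h0 hac hc]
    exact variance_DeltaF_cond_pos h0 hac hc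
  have hdiff : ζij - ζjj = (kappaF 1 ai (1 - bi) - kappaF 1 aj (1 - bj)) ^ 2 := by
    rw [hζij, hζjj]; ring
  have hle : ζjj ≤ ζij := sub_nonneg.mp (hdiff ▸ sq_nonneg _)
  have hij : 0 < ζij := hjj.trans_le hle
  rw [hζr]
  exact ⟨div_pos hjj hij, (div_le_one hij).mpr hle⟩
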